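/- Let k ∈ ℝ and let h : ℝ² → ℝ be C³ on ℝ² \ {0} and positively homogeneous of degree k. Let v ≠ 0 with k · h(v) ≠ 0. Then for every X ∈ ℝ²: D³h(v)(X, X, X) = (6·K₃(h)(v)/(k·h(v))³) · ρ_v(X)³ + (6·(k − 2)·K₂(h)(v)/(k·h(v))³) · ρ_v(X)² · Dh(v)(X) + ((k − 1)(k − 2)/(k·h(v))²) · (Dh(v)(X))³. -/

import Mathlib

/-!
Euler's relation `Dg(x) x = k g(x)` holds for every differentiable `g` that is positively
homogeneous of degree `k`, and `Dh`, `D²h` are homogeneous of degrees `k - 1`, `k - 2`. At `v`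
this gives `Dh(v) v = k h(v)`, `D²h(v)(v, ·) = (k - 1) Dh(v)` and
`D³h(v)(v, ·, ·) = (k - 2) D²h(v)`. With `w = (h₂, -h₁)` spanning `ker Dh(v)` one has
`k h(v) X = ρ_v(X) w + Dh(v)(X) v`, and expanding `D³h(v)` trilinearly only
`D³h(v)(w, w, w) = 6 K₃`, `D²h(v)(w, w) = 2 K₂` and the purely radial term survive.
-/

/-- First partial derivative of `h : ℝ² → ℝ` in the `i`-th coordinate direction. -/
noncomputable def pd1 (h : (Fin 2 → ℝ) → ℝ) (i : Fin 2) (x : Fin 2 → ℝ) : ℝ :=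
  fderiv ℝ h x (Pi.single i 1)

/-- Second partial derivative of `h : ℝ² → ℝ`. -/
noncomputable def pd2 (h : (Fin 2 → ℝ) → ℝ) (i j : Fin 2) (x : Fin 2 → ℝ) : ℝ :=
  iteratedFDeriv ℝ 2 h x ![Pi.single i 1, Pi.single j 1]

/-- Third partial derivative of `h : ℝ² → ℝ`. -/
noncomputable def pd3 (h : (Fin 2 → ℝ) → ℝ) (i j m : Fin 2) (x : Fin 2 → ℝ) : ℝ :=
  iteratedFDeriv ℝ 3 h x ![Pi.single i 1, Pi.single j 1, Pi.single m 1]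

/-- The relative invariant `K₂(h) = (1/2)(h₁₁h₂² − 2h₁₂h₁h₂ + h₂₂h₁²)` of binary forms. -/
noncomputable def K2 (h : (Fin 2 → ℝ) → ℝ) (x : Fin 2 → ℝ) : ℝ :=
  (1 / 2) * (pd2 h 0 0 x * (pd1 h 1 x) ^ 2 - 2 * pd2 h 0 1 x * pd1 h 0 x * pd1 h 1 x +
    pd2 h 1 1 x * (pd1 h 0 x) ^ 2)

/-- The relative invariant `K₃(h) = (1/6)(h₁₁₁h₂³ − 3h₁₁₂h₂²h₁ + 3h₁₂₂h₂h₁² − h₂₂₂h₁³)`. -/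
noncomputable def K3 (h : (Fin 2 → ℝ) → ℝ) (x : Fin 2 → ℝ) : ℝ :=
  (1 / 6) * (pd3 h 0 0 0 x * (pd1 h 1 x) ^ 3 -
    3 * pd3 h 0 0 1 x * (pd1 h 1 x) ^ 2 * pd1 h 0 x +
    3 * pd3 h 0 1 1 x * pd1 h 1 x * (pd1 h 0 x) ^ 2 -
    pd3 h 1 1 1 x * (pd1 h 0 x) ^ 3)

open Filter Topology

section Homogeneous

variable {E F : Type*} [NormedAddCommGroup E] [NormedSpace ℝ E]
  [NormedAddCommGroup F] [NormedSpace ℝ F]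

def IsPosHomogeneous (k : ℝ) (g : E → F) : Prop :=
  ∀ t : ℝ, 0 < t → ∀ x : E, x ≠ 0 → g (t • x) = t ^ k • g x

namespace IsPosHomogeneous

variable {k : ℝ} {g : E → F}

/-- No differentiability is needed: `fderiv` commutes with rescaling the variable. -/
theorem fderiv (hg : IsPosHomogeneous k g) : IsPosHomogeneous (k - 1) (_root_.fderiv ℝ g) := by
  intro t ht x hx
  have hscale : (fun y => g (t • y)) =ᶠ[𝓝 x] t ^ k • g := by
    filter_upwards [isOpen_ne.mem_nhds hx] with y hy using hg t ht y hy
  have h := hscale.fderiv_eq (𝕜 := ℝ)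
  rw [fderiv_comp_smul, fderiv_const_smul_field, Pi.smul_apply] at h
  rw [Real.rpow_sub_one ht.ne', div_eq_inv_mul, mul_smul, ← h, inv_smul_smul₀ ht.ne']

theorem fderiv_apply_self (hg : IsPosHomogeneous k g) {x : E} (hx : x ≠ 0)
    (hd : DifferentiableAt ℝ g x) : _root_.fderiv ℝ g x x = k • g x := by
  have hray : HasDerivAt (fun t : ℝ => g (id t • x)) (_root_.fderiv ℝ g x ((1 : ℝ) • x)) 1 :=
    hd.hasFDerivAt.comp_hasDerivAt_of_eq 1 ((hasDerivAt_id 1).smul_const x) (one_smul ℝ x).symm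
  have hpow : HasDerivAt (fun t : ℝ => t ^ k • g x) ((k * 1 ^ (k - 1)) • g x) 1 :=
    (Real.hasDerivAt_rpow_const (Or.inl one_ne_zero)).smul_const _
  have hev : (fun t : ℝ => g (t • x)) =ᶠ[𝓝 1] fun t => t ^ k • g x := by
    filter_upwards [eventually_gt_nhds zero_lt_one] with t ht using hg t ht x hx
  simpa using (hray.congr_of_eventuallyEq hev.symm).unique hpow

end IsPosHomogeneous

end Homogeneous

section ThirdDerivative

variable {E F : Type*} [NormedAddCommGroup E] [NormedSpace ℝ E]
  [NormedAddCommGroup F] [NormedSpace ℝ F] {f : E → F} {x : E}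

theorem iteratedFDeriv_three_apply (a b c : E) :
    iteratedFDeriv ℝ 3 f x ![a, b, c] = fderiv ℝ (fderiv ℝ (fderiv ℝ f)) x a b c := by
  rw [iteratedFDeriv_succ_apply_right, iteratedFDeriv_two_apply]
  rfl

theorem ContDiffAt.fderiv_fderiv_fderiv_swap_left (hf : ContDiffAt ℝ 3 f x) (a b c : E) :
    fderiv ℝ (fderiv ℝ (fderiv ℝ f)) x a b c = fderiv ℝ (fderiv ℝ (fderiv ℝ f)) x b a c :=
  congrArg (· c) <| ((hf.fderiv_right (m := 2) le_rfl).isSymmSndFDerivAt (by simp)).eq a b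

/-- Near `x` the second derivative equals its own flip, so its derivative is flipped too. -/
theorem ContDiffAt.fderiv_fderiv_fderiv_swap_right (hf : ContDiffAt ℝ 3 f x) (a b c : E) :
    fderiv ℝ (fderiv ℝ (fderiv ℝ f)) x a b c = fderiv ℝ (fderiv ℝ (fderiv ℝ f)) x a c b := by
  have hflip : fderiv ℝ (fderiv ℝ f) =ᶠ[𝓝 x]
      ContinuousLinearMap.flipₗᵢ ℝ E E F ∘ fderiv ℝ (fderiv ℝ f) := by
    filter_upwards [hf.eventually (by simp)] with y hy
    ext b c
    exact (hy.isSymmSndFDerivAt (by norm_num)).eq b c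
  have hcomp := LinearIsometryEquiv.comp_fderiv (𝕜 := ℝ) (E := E →L[ℝ] E →L[ℝ] F)
    (F := E →L[ℝ] E →L[ℝ] F) (ContinuousLinearMap.flipₗᵢ ℝ E E F)
    (f := fderiv ℝ (fderiv ℝ f)) (x := x)
  conv_lhs => rw [hflip.fderiv_eq, hcomp]
  rfl

end ThirdDerivative

section EulerSplitting

variable {E : Type*} [NormedAddCommGroup E] [NormedSpace ℝ E]

/-- In the trilinear expansion of `T₃ (ρ w + D v)`, the Euler relations turn the terms with one `v`
into `(k - 2) T₂ w w`, the terms with two `v`s into multiples of `T₁ w = 0`, and `T₃ v v v` into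
`(k - 1) (k - 2) T₁ v`. -/
theorem cubic_form_eq_of_euler_relations {k ρ D : ℝ} {v w X : E} {T₁ : E →L[ℝ] ℝ}
    {T₂ : E →L[ℝ] E →L[ℝ] ℝ} {T₃ : E →L[ℝ] E →L[ℝ] E →L[ℝ] ℝ}
    (hT₃₁₂ : ∀ a b c, T₃ a b c = T₃ b a c) (hT₃₂₃ : ∀ a b c, T₃ a b c = T₃ a c b)
    (heuler₂ : ∀ a, T₂ v a = (k - 1) * T₁ a) (heuler₃ : ∀ a b, T₃ v a b = (k - 2) * T₂ a b)
    (hw : T₁ w = 0) (hX : T₁ v • X = ρ • w + D • v) :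
    T₁ v ^ 3 * T₃ X X X = ρ ^ 3 * T₃ w w w + 3 * (k - 2) * ρ ^ 2 * D * T₂ w w +
      (k - 1) * (k - 2) * T₁ v * D ^ 3 := by
  have hcube : T₁ v ^ 3 * T₃ X X X = T₃ (T₁ v • X) (T₁ v • X) (T₁ v • X) := by
    simp only [map_smul, smul_apply, smul_eq_mul]
    ring
  rw [hcube, hX]
  simp only [map_add, map_smul, add_apply, smul_apply, smul_eq_mul]
  rw [hT₃₁₂ w v, hT₃₂₃ w w v, hT₃₁₂ w v, hT₃₂₃ v w v, hT₃₁₂ w v, hT₃₂₃ v w v]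
  simp only [heuler₃, heuler₂, hw]
  ring

end EulerSplitting

section BinaryForm

theorem eq_smul_single_add_smul_single (x : Fin 2 → ℝ) :
    x = x 0 • Pi.single 0 1 + x 1 • Pi.single 1 1 := by
  ext i; fin_cases i <;> simp

def kerVector (L : (Fin 2 → ℝ) →L[ℝ] ℝ) : Fin 2 → ℝ :=
  L (Pi.single 1 1) • Pi.single 0 1 - L (Pi.single 0 1) • Pi.single 1 1

variable (L : (Fin 2 → ℝ) →L[ℝ] ℝ)

theorem map_kerVector : L (kerVector L) = 0 := by
  simp only [kerVector, map_sub, map_smul, smul_eq_mul]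
  ring

theorem apply_eq_fin_two (X : Fin 2 → ℝ) :
    L X = X 0 * L (Pi.single 0 1) + X 1 * L (Pi.single 1 1) := by
  conv_lhs => rw [eq_smul_single_add_smul_single X]
  simp only [map_add, map_smul, smul_eq_mul]

theorem apply_smul_eq_kerVector_add (v X : Fin 2 → ℝ) :
    L v • X = (v 1 * X 0 - v 0 * X 1) • kerVector L + L X • v := by
  rw [apply_eq_fin_two L v, apply_eq_fin_two L X]
  ext i; fin_cases i <;> simp [kerVector] <;> ring

theorem two_mul_K2_eq {h : (Fin 2 → ℝ) → ℝ} {x : Fin 2 → ℝ} (hh : IsSymmSndFDerivAt ℝ h x) :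
    2 * K2 h x = fderiv ℝ (fderiv ℝ h) x (kerVector (fderiv ℝ h x)) (kerVector (fderiv ℝ h x)) := by
  simp only [K2, pd1, pd2, iteratedFDeriv_two_apply, kerVector, map_sub, map_smul, sub_apply,
    smul_apply, smul_eq_mul, Matrix.cons_val_zero, Matrix.cons_val_one]
  rw [hh.eq (Pi.single 1 1) (Pi.single 0 1)]
  ring

theorem six_mul_K3_eq {h : (Fin 2 → ℝ) → ℝ} {x : Fin 2 → ℝ} (hh : ContDiffAt ℝ 3 h x) :
    6 * K3 h x = fderiv ℝ (fderiv ℝ (fderiv ℝ h)) x (kerVector (fderiv ℝ h x))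
      (kerVector (fderiv ℝ h x)) (kerVector (fderiv ℝ h x)) := by
  simp only [K3, pd1, pd3, iteratedFDeriv_three_apply, kerVector, map_sub, map_smul, sub_apply,
    smul_apply, smul_eq_mul]
  set T := fderiv ℝ (fderiv ℝ (fderiv ℝ h)) x
  have h010 : T (Pi.single 0 1) (Pi.single 1 1) (Pi.single 0 1) =
      T (Pi.single 0 1) (Pi.single 0 1) (Pi.single 1 1) := hh.fderiv_fderiv_fderiv_swap_right ..
  have h100 : T (Pi.single 1 1) (Pi.single 0 1) (Pi.single 0 1) =
      T (Pi.single 0 1) (Pi.single 0 1) (Pi.single 1 1) :=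
    (hh.fderiv_fderiv_fderiv_swap_left ..).trans h010
  have h101 : T (Pi.single 1 1) (Pi.single 0 1) (Pi.single 1 1) =
      T (Pi.single 0 1) (Pi.single 1 1) (Pi.single 1 1) := hh.fderiv_fderiv_fderiv_swap_left ..
  have h110 : T (Pi.single 1 1) (Pi.single 1 1) (Pi.single 0 1) =
      T (Pi.single 0 1) (Pi.single 1 1) (Pi.single 1 1) :=
    (hh.fderiv_fderiv_fderiv_swap_right ..).trans h101
  rw [h010, h100, h101, h110]
  ring

end BinaryForm

/-- The paper's computation `Θ₃⁰ = (K₃/(ku)³)·ρ³` combined with the splitting of `Θ₃` along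
`ker Θ₁` and the radial direction, for binary forms of degree `k`. -/
theorem third_differential_binary_form (k : ℝ) (h : (Fin 2 → ℝ) → ℝ)
    (hf : ContDiffOn ℝ 3 h {x | x ≠ 0})
    (hhom : ∀ t : ℝ, 0 < t → ∀ x : Fin 2 → ℝ, x ≠ 0 → h (t • x) = t ^ k * h x)
    (v : Fin 2 → ℝ) (hv : v ≠ 0) (hkh : k * h v ≠ 0) (X : Fin 2 → ℝ) :
    iteratedFDeriv ℝ 3 h v ![X, X, X] =
      (6 * K3 h v / (k * h v) ^ 3) * (v 1 * X 0 - v 0 * X 1) ^ 3 +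
      (6 * (k - 2) * K2 h v / (k * h v) ^ 3) * (v 1 * X 0 - v 0 * X 1) ^ 2 *
        fderiv ℝ h v X +
      ((k - 1) * (k - 2) / (k * h v) ^ 2) * (fderiv ℝ h v X) ^ 3 := by
  have hC : ContDiffAt ℝ 3 h v := (hf v hv).contDiffAt (isOpen_ne.mem_nhds hv)
  have hhom' : IsPosHomogeneous k h := hhom
  have hC₁ : ContDiffAt ℝ 2 (fderiv ℝ h) v := hC.fderiv_right (by norm_num)
  have hC₂ : ContDiffAt ℝ 1 (fderiv ℝ (fderiv ℝ h)) v := hC₁.fderiv_right (by norm_num)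
  have heuler₁ : fderiv ℝ h v v = k * h v :=
    hhom'.fderiv_apply_self hv (hC.differentiableAt (by norm_num))
  have heuler₂ : ∀ a, fderiv ℝ (fderiv ℝ h) v v a = (k - 1) * fderiv ℝ h v a := fun a =>
    congrArg (· a) (hhom'.fderiv.fderiv_apply_self hv (hC₁.differentiableAt (by norm_num)))
  have heuler₃ : ∀ a b, fderiv ℝ (fderiv ℝ (fderiv ℝ h)) v v a b =
      (k - 2) * fderiv ℝ (fderiv ℝ h) v a b := fun a b => by
    have h₃ := hhom'.fderiv.fderiv.fderiv_apply_self hv (hC₂.differentiableAt one_ne_zero)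
    simpa [show k - 1 - 1 = k - 2 by ring] using congrArg (· a b) h₃
  have hsplit := cubic_form_eq_of_euler_relations hC.fderiv_fderiv_fderiv_swap_left
    hC.fderiv_fderiv_fderiv_swap_right heuler₂ heuler₃ (map_kerVector _)
    (apply_smul_eq_kerVector_add (fderiv ℝ h v) v X)
  rw [← two_mul_K2_eq (hC.isSymmSndFDerivAt (by norm_num)), ← six_mul_K3_eq hC, heuler₁] at hsplit
  have hk : k ≠ 0 := left_ne_zero_of_mul hkh
  have hhv : h v ≠ 0 := right_ne_zero_of_mul hkh
  rw [iteratedFDeriv_three_apply]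
  field_simp
  linear_combination hsplit
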